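/- arXiv:1710.11061 — 2 statements merged into one kernel-verified Lean document; each statement's English description precedes it below -/
import Mathlib

section
/- Let L > 1. Then ∫_{−π/2}^{π/2} (u_{ε,L}'(x))² dx tends to +∞ as ε tends to 0 from the right, where u_{ε,L}' denotes the derivative of u_{ε,L} (taken to be 0 at the finitely many points where u_{ε,L} is not differentiable). -/
/-!
Put `c = cos (π / 2L) > 0`. Since `cos x ≤ π/2 - x`, on the interval `(π/2 - εc, π/2)` the branch
`(1/ε) cos x` lies strictly below `c ≤ cos (x / L)`, so there `u_{ε,L}' = -(sin x)/ε`, and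
`sin² x ≥ 1/2` once `ε ≤ 1/2`. Since `u_{ε,L}` is Lipschitz, its derivative is bounded and
`(u_{ε,L}')²` is integrable, so the integral over `[-π/2, π/2]` is at least
`εc · 1/(2ε²) = c/(2ε) → ∞`.
-/

open Real Set Filter MeasureTheory

/-- The paper's `u_{ε,L}`. -/
noncomputable def minCos (L ε : ℝ) (y : ℝ) : ℝ := min (cos (y / L)) ((1 / ε) * cos y)

lemma deriv_min_of_lt {f g : ℝ → ℝ} {x : ℝ} (hf : ContinuousAt f x) (hg : ContinuousAt g x)
    (h : g x < f x) : deriv (fun y => min (f y) (g y)) x = deriv g x := by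
  refine Filter.EventuallyEq.deriv_eq ?_
  filter_upwards [hg.eventually_lt hf h] with y hy
  exact min_eq_right hy.le

lemma LipschitzWith.intervalIntegrable_deriv_sq {f : ℝ → ℝ} {K : NNReal} (hf : LipschitzWith K f)
    (a b : ℝ) : IntervalIntegrable (fun x => deriv f x ^ 2) volume a b := by
  refine (intervalIntegrable_const (c := (K : ℝ) ^ 2)).mono_fun'
    ((measurable_deriv f).pow_const 2).aestronglyMeasurable (Eventually.of_forall fun x => ?_)
  have hx : |deriv f x| ≤ K := norm_deriv_le_of_lipschitz hf
  simp only [norm_pow, Real.norm_eq_abs]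
  exact pow_le_pow_left₀ (abs_nonneg _) hx 2

lemma mul_le_integral_of_le_on_Ioo {f : ℝ → ℝ} {a b c d m : ℝ} (hca : c ≤ a) (hab : a ≤ b)
    (hbd : b ≤ d) (hf₀ : ∀ x, 0 ≤ f x) (hf : IntervalIntegrable f volume c d)
    (hm : ∀ x ∈ Ioo a b, m ≤ f x) : (b - a) * m ≤ ∫ x in c..d, f x := by
  have hf' : IntervalIntegrable f volume a b :=
    hf.mono_set <| by
      rw [uIcc_of_le hab, uIcc_of_le (hca.trans (hab.trans hbd))]
      exact Icc_subset_Icc hca hbd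
  calc (b - a) * m = ∫ _ in a..b, m := by simp
    _ ≤ ∫ x in a..b, f x :=
      intervalIntegral.integral_mono_on_of_le_Ioo hab intervalIntegrable_const hf' hm
    _ ≤ ∫ x in c..d, f x :=
      intervalIntegral.integral_mono_interval hca hab hbd (Eventually.of_forall hf₀) hf

lemma cos_le_pi_div_two_sub {x : ℝ} (hx : x ≤ π / 2) : cos x ≤ π / 2 - x := by
  rw [← sin_pi_div_two_sub]
  exact sin_le (by linarith)

lemma lipschitzWith_minCos (L ε : ℝ) : ∃ K, LipschitzWith K (minCos L ε) := by
  have h₁ : LipschitzWith (1 * ‖L⁻¹‖₊) fun y : ℝ => cos (y / L) := by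
    have hcomp : (fun y : ℝ => cos (y / L)) = cos ∘ (L⁻¹ • ·) := by
      funext y
      simp [div_eq_inv_mul]
    rw [hcomp]
    exact lipschitzWith_cos.comp (lipschitzWith_smul L⁻¹)
  have h₂ : LipschitzWith (‖1 / ε‖₊ * 1) fun y => (1 / ε) * cos y :=
    (lipschitzWith_smul (1 / ε)).comp lipschitzWith_cos
  exact ⟨_, h₁.min h₂⟩

section

variable {L ε x : ℝ}

lemma cos_lt_of_mem_Ioo {δ : ℝ} (hx : x ∈ Ioo (π / 2 - δ) (π / 2)) : cos x < δ := by
  linarith [cos_le_pi_div_two_sub hx.2.le, hx.1]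

lemma cos_pi_div_two_mul_pos (hL : 1 < L) : 0 < cos (π / (2 * L)) := by
  have hL₀ : 0 < L := by linarith
  apply cos_pos_of_mem_Ioo
  constructor
  · linarith [pi_pos, show 0 < π / (2 * L) by positivity]
  · rw [div_lt_div_iff₀ (by positivity) two_pos]
    nlinarith [pi_pos]

lemma cos_pi_div_two_mul_le_cos_div (hL : 1 ≤ L) (hx₀ : 0 ≤ x) (hx : x ≤ π / 2) :
    cos (π / (2 * L)) ≤ cos (x / L) := by
  have hL₀ : 0 < L := by linarith
  apply cos_le_cos_of_nonneg_of_le_pi (by positivity)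
  · rw [div_le_iff₀ (by positivity)]
    nlinarith [pi_pos]
  · rw [div_le_div_iff₀ hL₀ (by positivity)]
    nlinarith

lemma cos_div_lt_of_mem_Ioo (hL : 1 ≤ L) (hε₀ : 0 < ε) (hε : ε ≤ 1 / 2)
    (hx : x ∈ Ioo (π / 2 - ε * cos (π / (2 * L))) (π / 2)) : (1 / ε) * cos x < cos (x / L) := by
  have hc : cos (π / (2 * L)) ≤ 1 := cos_le_one _
  have hx₀ : 0 ≤ x := by nlinarith [pi_gt_three, hx.1]
  calc (1 / ε) * cos x < (1 / ε) * (ε * cos (π / (2 * L))) := by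
        gcongr
        exact cos_lt_of_mem_Ioo hx
    _ = cos (π / (2 * L)) := by field_simp
    _ ≤ cos (x / L) := cos_pi_div_two_mul_le_cos_div hL hx₀ hx.2.le

lemma one_div_two_mul_sq_le_deriv_minCos_sq (hL : 1 ≤ L) (hε₀ : 0 < ε) (hε : ε ≤ 1 / 2)
    (hx : x ∈ Ioo (π / 2 - ε * cos (π / (2 * L))) (π / 2)) :
    1 / (2 * ε ^ 2) ≤ deriv (minCos L ε) x ^ 2 := by
  have hderiv : deriv (minCos L ε) x = -(ε⁻¹ * sin x) := by
    unfold minCos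
    rw [deriv_min_of_lt (by fun_prop) (by fun_prop) (cos_div_lt_of_mem_Ioo hL hε₀ hε hx)]
    simp
  have hc : cos (π / (2 * L)) ≤ 1 := cos_le_one _
  have hcos₀ : 0 ≤ cos x :=
    cos_nonneg_of_neg_pi_div_two_le_of_le (by nlinarith [pi_gt_three, hx.1]) hx.2.le
  have hcos : cos x < 1 / 2 := by nlinarith [cos_lt_of_mem_Ioo hx]
  have hsin : 1 / 2 ≤ sin x ^ 2 := by nlinarith [sin_sq_add_cos_sq x]
  rw [hderiv, neg_sq, mul_pow, inv_pow, ← div_eq_inv_mul, ← div_div]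
  gcongr

lemma div_le_integral_deriv_minCos_sq (hL : 1 < L) (hε₀ : 0 < ε) (hε : ε ≤ 1 / 2) :
    cos (π / (2 * L)) / (2 * ε) ≤ ∫ x in (-(π / 2))..(π / 2), deriv (minCos L ε) x ^ 2 := by
  obtain ⟨K, hK⟩ := lipschitzWith_minCos L ε
  have hc₀ := cos_pi_div_two_mul_pos hL
  have hc : cos (π / (2 * L)) ≤ 1 := cos_le_one _
  calc cos (π / (2 * L)) / (2 * ε)
      = (π / 2 - (π / 2 - ε * cos (π / (2 * L)))) * (1 / (2 * ε ^ 2)) := by field_simp; ring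
    _ ≤ _ := mul_le_integral_of_le_on_Ioo (by nlinarith [pi_gt_three]) (by nlinarith) le_rfl
        (fun _ => sq_nonneg _) (hK.intervalIntegrable_deriv_sq _ _)
        fun _ hx => one_div_two_mul_sq_le_deriv_minCos_sq hL.le hε₀ hε hx

end

/-- For `L > 1`, the squared `H¹₀`-norm of `u_{ε,L}(x) = min(cos(x/L), (1/ε)·cos x)`
tends to `+∞` as `ε → 0⁺`. -/
theorem stmt_9 (L : ℝ) (hL : 1 < L) :
    Filter.Tendsto
      (fun ε : ℝ => ∫ x in (-(π / 2))..(π / 2),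
        (deriv (fun y => min (Real.cos (y / L)) ((1 / ε) * Real.cos y)) x) ^ 2)
      (nhdsWithin 0 (Set.Ioi 0)) Filter.atTop := by
  have hlower : ∀ ε ∈ Ioc (0 : ℝ) (1 / 2), cos (π / (2 * L)) / 2 * ε⁻¹ ≤
      ∫ x in (-(π / 2))..(π / 2), deriv (minCos L ε) x ^ 2 := fun ε hε =>
    (div_le_integral_deriv_minCos_sq hL hε.1 hε.2).trans_eq' (by ring)
  exact tendsto_atTop_mono' _ (eventually_of_mem (Ioc_mem_nhdsGT one_half_pos) hlower)
    (tendsto_inv_nhdsGT_zero.const_mul_atTop (half_pos (cos_pi_div_two_mul_pos hL)))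
end

section
/- Let L > 1 and define N(ε) = ∫_{−π/2}^{π/2} (u_{ε,L}'(x))² dx for ε ∈ (0,1], where u_{ε,L}' denotes the derivative of u_{ε,L} (taken to be 0 at the finitely many points where u_{ε,L} is not differentiable). Then N(1) = π/2, and for every real number s ≥ π/2 there exists ε ∈ (0,1] with N(ε) = s. -/
/-!
Parametrize `ε` by the point `c ∈ [0, π/2)` where the two branches cross:
`ε = cos c / cos (c/L)`, which is strictly decreasing in `c` because `L > 1`. Then `u_{ε,L}`
is `cos (x/L)` on `|x| < c` and `ε⁻¹ cos x` on `c < |x| < π/2`, so `N(ε)` is an explicit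
elementary function of `c`. It equals `π/2` at `c = 0` and is at least
`cos² (π/(2L)) / (π/2 - c) - 1`, hence unbounded as `c → π/2`; the intermediate value theorem
gives every value `s ≥ π/2`.
-/

open Real Set MeasureTheory intervalIntegral

lemma deriv_min_eq_left_of_forall_le {f g : ℝ → ℝ} {s : Set ℝ} (hs : IsOpen s)
    (hfg : ∀ y ∈ s, f y ≤ g y) {x : ℝ} (hx : x ∈ s) :
    deriv (fun y => min (f y) (g y)) x = deriv f x :=
  (Filter.eventuallyEq_of_mem (hs.mem_nhds hx) fun y hy => min_eq_left (hfg y hy)).deriv_eq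

noncomputable def truncCos (L ε : ℝ) : ℝ → ℝ :=
  fun y => min (cos (y / L)) ((1 / ε) * cos y)

noncomputable def truncCosEnergy (L ε : ℝ) : ℝ :=
  ∫ x in -(π / 2)..π / 2, deriv (truncCos L ε) x ^ 2

/-- The value of `ε` for which the two branches of `truncCos L ε` cross at `±c`. -/
noncomputable def crossingEps (L c : ℝ) : ℝ := cos c / cos (c / L)

noncomputable def crossingEnergy (L c : ℝ) : ℝ :=
  c / L ^ 2 - sin (c / L) * cos (c / L) / L
    + (cos (c / L) / cos c) ^ 2 * (π / 2 - c + sin c * cos c)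

section

variable {L : ℝ}

lemma cos_pos_of_abs_lt {y : ℝ} (hy : |y| < π / 2) : 0 < cos y :=
  cos_pos_of_mem_Ioo ⟨(abs_lt.mp hy).1, (abs_lt.mp hy).2⟩

lemma abs_div_le_abs (hL : 1 ≤ L) (y : ℝ) : |y / L| ≤ |y| := by
  rw [abs_div, abs_of_pos (a := L) (by linarith)]
  exact div_le_self (abs_nonneg y) hL

lemma cos_div_pos (hL : 1 ≤ L) {y : ℝ} (hy : |y| < π / 2) : 0 < cos (y / L) :=
  cos_pos_of_abs_lt ((abs_div_le_abs hL y).trans_lt hy)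

lemma cos_le_cos_div (hL : 1 ≤ L) {y : ℝ} (hy0 : 0 ≤ y) (hy : y ≤ π) :
    cos y ≤ cos (y / L) :=
  cos_le_cos_of_nonneg_of_le_pi (div_nonneg hy0 (by linarith)) hy (div_le_self hy0 hL)

lemma crossingEps_abs (L y : ℝ) : crossingEps L |y| = crossingEps L y := by
  rcases abs_choice y with h | h <;> simp [crossingEps, h, neg_div]

lemma crossingEps_strictAntiOn (hL : 1 < L) : StrictAntiOn (crossingEps L) (Ico 0 (π / 2)) := by
  have hL0 : 0 < L := by linarith
  have hcosL : ∀ x ∈ Ico 0 (π / 2), 0 < cos (x / L) := fun x hx =>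
    cos_div_pos hL.le (by rw [abs_of_nonneg hx.1]; exact hx.2)
  apply strictAntiOn_of_deriv_neg (convex_Ico 0 (π / 2))
  · exact continuous_cos.continuousOn.div (by fun_prop) fun x hx => (hcosL x hx).ne'
  · rw [interior_Ico]
    intro x ⟨hx0, hx⟩
    have hxL : x / L < x := div_lt_self hx0 hL
    have hxL0 : 0 < x / L := by positivity
    have hcL := hcosL x ⟨hx0.le, hx⟩
    have hsinL : 0 ≤ sin (x / L) := sin_nonneg_of_nonneg_of_le_pi (by positivity) (by linarith)
    have hsin : sin (x / L) < sin x :=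
      strictMonoOn_sin ⟨by linarith, by linarith⟩ ⟨by linarith, by linarith⟩ hxL
    have hcos : cos x ≤ cos (x / L) := cos_le_cos_div hL.le hx0.le (by linarith)
    have hderiv : HasDerivAt (crossingEps L)
        ((-sin x * cos (x / L) - cos x * (-sin (x / L) * (1 / L))) / cos (x / L) ^ 2) x :=
      (hasDerivAt_cos x).div ((hasDerivAt_id x).div_const L).cos hcL.ne'
    rw [hderiv.deriv]
    refine div_neg_of_neg_of_pos ?_ (by positivity)
    have hsc : 0 ≤ cos (x / L) * sin (x / L) := mul_nonneg hcL.le hsinL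
    calc -sin x * cos (x / L) - cos x * (-sin (x / L) * (1 / L))
        = cos x * sin (x / L) * (1 / L) - cos (x / L) * sin x := by ring
      _ ≤ cos (x / L) * sin (x / L) * (1 / L) - cos (x / L) * sin x := by
        gcongr
      _ ≤ cos (x / L) * sin (x / L) - cos (x / L) * sin x :=
        sub_le_sub_right (mul_le_of_le_one_right hsc (div_le_one_of_le₀ hL.le hL0.le)) _
      _ < 0 := by nlinarith [mul_lt_mul_of_pos_left hsin hcL]

lemma crossingEps_pos (hL : 1 ≤ L) {y : ℝ} (hy : |y| < π / 2) : 0 < crossingEps L y :=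
  div_pos (cos_pos_of_abs_lt hy) (cos_div_pos hL hy)

lemma cos_div_le_one_div_mul_cos_iff (hL : 1 ≤ L) {ε y : ℝ} (hε : 0 < ε)
    (hy : |y| < π / 2) :
    cos (y / L) ≤ (1 / ε) * cos y ↔ ε ≤ crossingEps L y := by
  rw [crossingEps, one_div_mul_eq_div, le_div_iff₀ hε, le_div_iff₀ (cos_div_pos hL hy),
    mul_comm]

variable {c : ℝ}

lemma cos_div_le_of_abs_lt (hL : 1 < L) (hc : c < π / 2) {y : ℝ} (hy : |y| < c) :
    cos (y / L) ≤ (1 / crossingEps L c) * cos y := by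
  have hc0 : 0 ≤ c := (abs_nonneg y).trans hy.le
  refine (cos_div_le_one_div_mul_cos_iff hL.le (crossingEps_pos hL.le ?_) (hy.trans hc)).mpr ?_
  · rwa [abs_of_nonneg hc0]
  rw [← crossingEps_abs L y]
  exact (crossingEps_strictAntiOn hL ⟨abs_nonneg y, hy.trans hc⟩ ⟨hc0, hc⟩ hy).le

lemma one_div_mul_cos_le_of_lt_abs (hL : 1 < L) (hc : 0 ≤ c) {y : ℝ} (hcy : c < |y|)
    (hy : |y| < π / 2) : (1 / crossingEps L c) * cos y ≤ cos (y / L) := by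
  have hc' : |c| < π / 2 := by rw [abs_of_nonneg hc]; exact hcy.trans hy
  refine le_of_not_ge fun h => ?_
  rw [cos_div_le_one_div_mul_cos_iff hL.le (crossingEps_pos hL.le hc') hy,
    ← crossingEps_abs L y] at h
  exact h.not_gt (crossingEps_strictAntiOn hL ⟨hc, hcy.trans hy⟩ ⟨abs_nonneg y, hy⟩ hcy)

lemma sq_deriv_truncCos_of_abs_lt (hL : 1 < L) (hc : c < π / 2) {x : ℝ} (hx : |x| < c) :
    deriv (truncCos L (crossingEps L c)) x ^ 2 = (sin (x / L) / L) ^ 2 := by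
  have hs : IsOpen {y : ℝ | |y| < c} := isOpen_lt continuous_abs continuous_const
  unfold truncCos
  rw [deriv_min_eq_left_of_forall_le hs (fun y hy => cos_div_le_of_abs_lt hL hc hy) hx,
    ((hasDerivAt_id' x).div_const L).cos.deriv]
  ring

lemma sq_deriv_truncCos_of_lt_abs (hL : 1 < L) (hc : 0 ≤ c) {x : ℝ} (hcx : c < |x|)
    (hx : |x| < π / 2) :
    deriv (truncCos L (crossingEps L c)) x ^ 2 = (sin x / crossingEps L c) ^ 2 := by
  have hs : IsOpen {y : ℝ | c < |y| ∧ |y| < π / 2} :=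
    (isOpen_lt continuous_const continuous_abs).inter (isOpen_lt continuous_abs continuous_const)
  unfold truncCos
  simp_rw [min_comm (cos _)]
  rw [deriv_min_eq_left_of_forall_le hs
      (fun y hy => one_div_mul_cos_le_of_lt_abs hL hc hy.1 hy.2) ⟨hcx, hx⟩,
    ((hasDerivAt_cos x).const_mul _).deriv]
  ring

lemma integral_sq_sin_div_self (hL : L ≠ 0) (c : ℝ) :
    ∫ x in -c..c, (sin (x / L) / L) ^ 2 = c / L ^ 2 - sin (c / L) * cos (c / L) / L := by
  simp_rw [div_pow, intervalIntegral.integral_div]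
  rw [intervalIntegral.integral_comp_div (fun x => sin x ^ 2) hL, integral_sin_sq]
  simp only [neg_div, sin_neg, cos_neg, smul_eq_mul]
  field_simp
  ring

theorem truncCosEnergy_crossingEps (hL : 1 < L) (hc0 : 0 ≤ c) (hc : c < π / 2) :
    truncCosEnergy L (crossingEps L c) = crossingEnergy L c := by
  set ε := crossingEps L c
  set D := fun x => deriv (truncCos L ε) x ^ 2
  have hmid : EqOn D (fun x => (sin (x / L) / L) ^ 2) (uIoo (-c) c) := fun x hx => by
    rw [uIoo_of_le (by linarith)] at hx
    exact sq_deriv_truncCos_of_abs_lt hL hc (abs_lt.mpr hx)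
  have hright : EqOn D (fun x => (sin x / ε) ^ 2) (uIoo c (π / 2)) := fun x hx => by
    rw [uIoo_of_le hc.le] at hx
    have hx' : |x| = x := abs_of_pos (hc0.trans_lt hx.1)
    exact sq_deriv_truncCos_of_lt_abs hL hc0 (hx'.symm ▸ hx.1) (hx'.symm ▸ hx.2)
  have hleft : EqOn D (fun x => (sin x / ε) ^ 2) (uIoo (-(π / 2)) (-c)) := fun x hx => by
    rw [uIoo_of_le (by linarith)] at hx
    have hx' : |x| = -x := abs_of_neg (hx.2.trans_le (by linarith))
    exact sq_deriv_truncCos_of_lt_abs hL hc0 (by rw [hx']; linarith [hx.2])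
      (by rw [hx']; linarith [hx.1])
  have hint : ∀ {a b : ℝ} {g : ℝ → ℝ}, Continuous g → EqOn D g (uIoo a b) →
      IntervalIntegrable D volume a b := fun hg h =>
    (hg.intervalIntegrable _ _).congr_uIoo h.symm
  have hmidI := hint (by fun_prop) hmid
  have hrightI := hint (by fun_prop) hright
  have hleftI := hint (by fun_prop) hleft
  rw [truncCosEnergy, ← integral_add_adjacent_intervals hleftI (hmidI.trans hrightI),
    ← integral_add_adjacent_intervals hmidI hrightI, integral_congr_uIoo hleft,
    integral_congr_uIoo hmid, integral_congr_uIoo hright,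
    integral_sq_sin_div_self (by linarith)]
  simp only [div_pow, intervalIntegral.integral_div, integral_sin_sq, crossingEnergy, ε,
    crossingEps, sin_neg, cos_neg, sin_pi_div_two, cos_pi_div_two]
  field_simp
  ring

lemma crossingEps_zero (L : ℝ) : crossingEps L 0 = 1 := by simp [crossingEps]

lemma crossingEnergy_zero (L : ℝ) : crossingEnergy L 0 = π / 2 := by simp [crossingEnergy]

lemma crossingEps_mem_Ioc (hL : 1 ≤ L) (hc0 : 0 ≤ c) (hc : c < π / 2) :
    crossingEps L c ∈ Ioc 0 1 :=
  have hc' : |c| < π / 2 := by rwa [abs_of_nonneg hc0]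
  ⟨crossingEps_pos hL hc',
    div_le_one_of_le₀ (cos_le_cos_div hL hc0 (by linarith [pi_pos])) (cos_div_pos hL hc').le⟩

lemma continuousOn_crossingEnergy (L : ℝ) : ContinuousOn (crossingEnergy L) (Ico 0 (π / 2)) := by
  have hcos : ∀ c ∈ Ico 0 (π / 2), cos c ≠ 0 := fun c hc =>
    (cos_pos_of_mem_Ioo ⟨by linarith [hc.1, pi_pos], hc.2⟩).ne'
  unfold crossingEnergy
  fun_prop (disch := assumption)

lemma sq_cos_div_div_sub_one_le_crossingEnergy (hL : 1 ≤ L) (hc0 : 0 ≤ c) (hc : c < π / 2) :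
    cos (π / 2 / L) ^ 2 / (π / 2 - c) - 1 ≤ crossingEnergy L c := by
  have hL0 : 0 < L := by linarith
  have hd : 0 < π / 2 - c := by linarith
  have hcos : 0 < cos c := cos_pos_of_mem_Ioo ⟨by linarith [pi_pos], hc⟩
  have hcos_le : cos c ≤ π / 2 - c := by
    rw [← sin_pi_div_two_sub]
    exact sin_le hd.le
  have hπL : 0 ≤ π / 2 / L := by positivity
  have hk : 0 ≤ cos (π / 2 / L) :=
    cos_nonneg_of_mem_Icc ⟨by linarith [pi_pos], div_le_self (by positivity) hL⟩
  have hk_le : cos (π / 2 / L) ≤ cos (c / L) :=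
    cos_le_cos_of_nonneg_of_le_pi (by positivity)
      (by linarith [div_le_self (by positivity : 0 ≤ π / 2) hL, pi_pos])
      (div_le_div_of_nonneg_right hc.le hL0.le)
  have hsc : 0 ≤ sin c * cos c :=
    mul_nonneg (sin_nonneg_of_nonneg_of_le_pi hc0 (by linarith)) hcos.le
  have hsinL : sin (c / L) * cos (c / L) / L ≤ 1 := by
    rw [div_le_one hL0]
    nlinarith [sq_nonneg (sin (c / L) - cos (c / L)), sin_sq_add_cos_sq (c / L)]
  have hmain : cos (π / 2 / L) ^ 2 / (π / 2 - c)
      ≤ (cos (c / L) / cos c) ^ 2 * (π / 2 - c + sin c * cos c) := calc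
    cos (π / 2 / L) ^ 2 / (π / 2 - c)
        = cos (π / 2 / L) ^ 2 * (π / 2 - c) / (π / 2 - c) ^ 2 := by
      field_simp
    _ ≤ cos (c / L) ^ 2 * (π / 2 - c) / cos c ^ 2 := by gcongr
    _ ≤ (cos (c / L) / cos c) ^ 2 * (π / 2 - c + sin c * cos c) := by
      rw [div_pow, div_mul_eq_mul_div]
      gcongr
      linarith
  unfold crossingEnergy
  have : 0 ≤ c / L ^ 2 := by positivity
  linarith

theorem exists_crossingEnergy_eq (hL : 1 < L) {s : ℝ} (hs : π / 2 ≤ s) :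
    ∃ c ∈ Ico 0 (π / 2), crossingEnergy L c = s := by
  set k := cos (π / 2 / L)
  have hk : 0 < k := cos_pos_of_mem_Ioo
    ⟨by linarith [pi_pos, (by positivity : 0 ≤ π / 2 / L)], div_lt_self (by positivity) hL⟩
  have hs1 : 1 ≤ s + 1 := by linarith [pi_pos]
  have hδ : 0 < k ^ 2 / (s + 1) := by positivity
  have hδ_le : k ^ 2 / (s + 1) ≤ π / 2 := by
    rw [div_le_iff₀ (by linarith)]
    nlinarith [cos_le_one (π / 2 / L), pi_gt_three]
  -- at `c₁ = π/2 - k²/(s+1)` the lower bound `k²/(π/2 - c) - 1` equals `s`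
  set c₁ := π / 2 - k ^ 2 / (s + 1) with hc₁_def
  have hc₁0 : 0 ≤ c₁ := by linarith
  have hc₁ : c₁ < π / 2 := by linarith
  have hs_le : s ≤ crossingEnergy L c₁ := by
    have := sq_cos_div_div_sub_one_le_crossingEnergy hL.le hc₁0 hc₁
    rwa [hc₁_def, sub_sub_cancel, div_div_cancel₀ (by positivity), add_sub_cancel_right] at this
  obtain ⟨c, hc, rfl⟩ := intermediate_value_Icc hc₁0
    ((continuousOn_crossingEnergy L).mono (Icc_subset_Ico_right hc₁))
    ⟨(crossingEnergy_zero L).symm ▸ hs, hs_le⟩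
  exact ⟨c, ⟨hc.1, hc.2.trans_lt hc₁⟩, rfl⟩

end

/-- For `L > 1`, the squared `H¹₀`-norm `N(ε)` of
`u_{ε,L}(x) = min(cos(x/L), (1/ε)·cos x)` satisfies `N(1) = π/2` and attains
every value `s ≥ π/2` for some `ε ∈ (0,1]`. -/
theorem stmt_10 (L : ℝ) (hL : 1 < L) (N : ℝ → ℝ)
    (hN : N = fun ε => ∫ x in (-(π / 2))..(π / 2),
      (deriv (fun y => min (Real.cos (y / L)) ((1 / ε) * Real.cos y)) x) ^ 2) :
    N 1 = π / 2 ∧ ∀ s : ℝ, π / 2 ≤ s → ∃ ε ∈ Set.Ioc (0 : ℝ) 1, N ε = s := by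
  obtain rfl : N = truncCosEnergy L := hN
  refine ⟨?_, fun s hs => ?_⟩
  · rw [← crossingEps_zero L, truncCosEnergy_crossingEps hL le_rfl (by positivity),
      crossingEnergy_zero]
  · obtain ⟨c, ⟨hc0, hc⟩, rfl⟩ := exists_crossingEnergy_eq hL hs
    exact ⟨crossingEps L c, crossingEps_mem_Ioc hL.le hc0 hc,
      truncCosEnergy_crossingEps hL hc0 hc⟩
end
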